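/- For any n ∈ ℕ, q > 0 and α ∈ ℝ, the (n+1)×(n+1) matrix L^{(q,α)} of change of basis from the q-Abel basis to the monomial basis — i.e., the lower triangular matrix with entries l_{1,1} = 1, l_{i,1} = 0 for i ≥ 2, and l_{i,j} = (-α[i-1])^{i-j} q^{binom(j-1,2)} qbinom(i-2, i-j) for 2 ≤ j ≤ i ≤ n+1 — factorizes as L^{(q,α)} = F_n F_{n-1} ⋯ F_1 D, where F_k is the lower bidiagonal matrix with unit diagonal and subdiagonal entries m_{i,j} in positions (i, i-1) active at level k (m_{i,1} := 0 for 2 ≤ i ≤ n+1 and m_{i,j} := -q^{j-2} ([i-1]/[i-2])^{i-j} [i-j] α for 2 ≤ j < i ≤ n+1), and D = diag(q^{binom(i-1,2)})_{i=1}^{n+1}. -/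

import Mathlib

open Finset Matrix

noncomputable def qInt (q : ℝ) (m : ℕ) : ℝ := ∑ i ∈ Finset.range m, q ^ i

noncomputable def qFact (q : ℝ) (m : ℕ) : ℝ := ∏ i ∈ Finset.range m, qInt q (i + 1)

noncomputable def qBinom (q : ℝ) (m k : ℕ) : ℝ :=
  if k ≤ m then qFact q m / (qFact q k * qFact q (m - k)) else 0

noncomputable def Lmat (q α : ℝ) (n : ℕ) : Matrix (Fin (n + 1)) (Fin (n + 1)) ℝ :=
  Matrix.of fun i j =>
    if j.1 = 0 then (if i.1 = 0 then 1 else 0)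
    else if j.1 ≤ i.1 then
      (-α * qInt q i.1) ^ (i.1 - j.1) * q ^ (j.1.choose 2) * qBinom q (i.1 - 1) (i.1 - j.1)
    else 0

/-- The multipliers of the Neville elimination of `Lmat` (1-based indices). -/
noncomputable def mMult (q α : ℝ) (i j : ℕ) : ℝ :=
  if j = 1 then 0
  else -q ^ (j - 2) * (qInt q (i - 1) / qInt q (i - 2)) ^ (i - j) * qInt q (i - j) * α

/-- The lower bidiagonal factor `F_k` (for `1 ≤ k ≤ n`): unit diagonal, subdiagonal
entries `0` in rows `2,…,k` and `m_{k+1,1}, …, m_{n+1,n+1-k}` in rows `k+1,…,n+1`. -/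
noncomputable def Fmat (q α : ℝ) (n k : ℕ) : Matrix (Fin (n + 1)) (Fin (n + 1)) ℝ :=
  Matrix.of fun r c =>
    if r = c then 1
    else if r.1 = c.1 + 1 ∧ k ≤ r.1 then mMult q α (r.1 + 1) (r.1 + 1 - k) else 0

/-! The partial products `F_n ⋯ F_{s+1}` have a closed form: for `s < c < r` (0-based) their
`(r, c)` entry is `(-α[r])^(r-c) ([r]/[c])^s qbinom(r-s-1, c-s-1)`, the diagonal is `1` and all
other entries vanish. Right multiplication by `F_{s+1}` adds to each column `c` a multiple of
column `c + 1`; after cancelling the common factor, the closed form survives this step because of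
the q-integer identity
`[k+1+t] qbinom(m+1, k+1) = [m+1+t] qbinom(m, k) + q^(k+1) [t] qbinom(m, k+1)`.
At `s = n` the product is empty, and at `s = 0` the closed form times `D` is `L` by the symmetry
of the q-binomial coefficients. -/

theorem qInt_ne_zero {q : ℝ} (hq : q ≠ -1) {m : ℕ} (hm : m ≠ 0) : qInt q m ≠ 0 :=
  geom_sum_ne_zero hq hm

theorem qFact_ne_zero {q : ℝ} (hq : q ≠ -1) (m : ℕ) : qFact q m ≠ 0 :=
  prod_ne_zero_iff.2 fun i _ => qInt_ne_zero hq i.succ_ne_zero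

theorem qFact_zero (q : ℝ) : qFact q 0 = 1 :=
  prod_range_zero _

theorem qFact_succ (q : ℝ) (m : ℕ) : qFact q (m + 1) = qFact q m * qInt q (m + 1) :=
  prod_range_succ _ m

theorem qInt_add (q : ℝ) (a b : ℕ) : qInt q (a + b) = qInt q a + q ^ a * qInt q b := by
  simp only [qInt, sum_range_add, mul_sum, pow_add]

theorem qInt_add_mul_qInt_add (q : ℝ) (a b t : ℕ) :
    qInt q (a + t) * qInt q (a + b) =
      qInt q (a + b + t) * qInt q a + q ^ a * qInt q t * qInt q b := by
  have hat := qInt_add q a t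
  have habt := qInt_add q (a + b) t
  have hab := qInt_add q b a
  rw [add_comm b a] at hab
  linear_combination qInt q (a + b) * hat - qInt q a * habt + q ^ a * qInt q t * hab

theorem qBinom_zero_right {q : ℝ} (hq : q ≠ -1) (m : ℕ) : qBinom q m 0 = 1 := by
  simp [qBinom, qFact_zero, qFact_ne_zero hq]

theorem qBinom_self {q : ℝ} (hq : q ≠ -1) (m : ℕ) : qBinom q m m = 1 := by
  simp [qBinom, qFact_zero, qFact_ne_zero hq]

theorem qBinom_symm (q : ℝ) {m k : ℕ} (h : k ≤ m) : qBinom q m k = qBinom q m (m - k) := by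
  rw [qBinom, qBinom, if_pos h, if_pos (m.sub_le k), Nat.sub_sub_self h, mul_comm]

theorem qInt_mul_qBinom_succ_succ {q : ℝ} (hq : q ≠ -1) {m k : ℕ} (hkm : k < m) (t : ℕ) :
    qInt q (k + 1 + t) * qBinom q (m + 1) (k + 1) =
      qInt q (m + 1 + t) * qBinom q m k + q ^ (k + 1) * qInt q t * qBinom q m (k + 1) := by
  obtain ⟨v, rfl⟩ : ∃ v, m = k + 1 + v := ⟨m - (k + 1), by omega⟩
  have hcore := qInt_add_mul_qInt_add q (k + 1) (v + 1) t
  rw [show k + 1 + (v + 1) = k + 1 + v + 1 by omega] at hcore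
  simp only [qBinom, if_pos (by omega : k + 1 ≤ k + 1 + v + 1),
    if_pos (by omega : k ≤ k + 1 + v), if_pos (by omega : k + 1 ≤ k + 1 + v),
    show k + 1 + v + 1 - (k + 1) = v + 1 by omega,
    show k + 1 + v - k = v + 1 by omega, show k + 1 + v - (k + 1) = v by omega,
    qFact_succ q (k + 1 + v), qFact_succ q k, qFact_succ q v]
  have hFk := qFact_ne_zero hq k
  have hFv := qFact_ne_zero hq v
  have hk : qInt q (k + 1) ≠ 0 := qInt_ne_zero hq k.succ_ne_zero
  have hv : qInt q (v + 1) ≠ 0 := qInt_ne_zero hq v.succ_ne_zero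
  field_simp
  linear_combination qFact q (k + 1 + v) * hcore

theorem mul_prod_map_range_reverse_of_mul_eq {M : Type*} [Monoid M] (W F : ℕ → M) (d : ℕ)
    (h : ∀ t < d, W (t + 1) * F t = W t) :
    W d * ((List.range d).reverse.map F).prod = W 0 := by
  induction d with
  | zero => simp
  | succ d ih =>
    rw [List.range_succ, List.reverse_append, List.reverse_singleton, List.singleton_append,
      List.map_cons, List.prod_cons, ← mul_assoc, h d d.lt_add_one, ih fun t ht => h t (by omega)]

section FactorTail

variable {q α : ℝ}

/-- The `(r, c)` entry (0-based) of `F_n ⋯ F_{s+1}`. -/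
noncomputable def FtailEntry (q α : ℝ) (s r c : ℕ) : ℝ :=
  if c = r then 1
  else if s < c ∧ c < r then
    (-α * qInt q r) ^ (r - c) * (qInt q r / qInt q c) ^ s * qBinom q (r - s - 1) (c - s - 1)
  else 0

noncomputable def Ftail (q α : ℝ) (n s : ℕ) : Matrix (Fin (n + 1)) (Fin (n + 1)) ℝ :=
  of fun r c => FtailEntry q α s r c

theorem FtailEntry_self (s r : ℕ) : FtailEntry q α s r r = 1 := by
  simp [FtailEntry]

theorem FtailEntry_of_lt {s r c : ℕ} (h : r < c) : FtailEntry q α s r c = 0 := by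
  simp only [FtailEntry]
  rw [if_neg (by omega), if_neg (by omega)]

theorem FtailEntry_of_le {s r c : ℕ} (hcs : c ≤ s) (hcr : c ≠ r) :
    FtailEntry q α s r c = 0 := by
  simp only [FtailEntry]
  rw [if_neg hcr, if_neg (by omega)]

theorem FtailEntry_of_lt_of_le (hq : q ≠ -1) {s r c : ℕ} (hsc : s < c) (hcr : c ≤ r) :
    FtailEntry q α s r c =
      (-α * qInt q r) ^ (r - c) * (qInt q r / qInt q c) ^ s *
        qBinom q (r - s - 1) (c - s - 1) := by
  rcases hcr.eq_or_lt with rfl | hcr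
  · rw [FtailEntry_self, Nat.sub_self, div_self (qInt_ne_zero hq (by omega)), qBinom_self hq]
    simp
  · simp only [FtailEntry]
    rw [if_neg hcr.ne, if_pos ⟨hsc, hcr⟩]

theorem mMult_add_two_of_lt {s c : ℕ} (h : s < c) :
    mMult q α (c + 2) (c + 1 - s) =
      -q ^ (c - s - 1) * (qInt q (c + 1) / qInt q c) ^ (s + 1) * qInt q (s + 1) * α := by
  rw [mMult, if_neg (by omega), show c + 1 - s - 2 = c - s - 1 by omega,
    show c + 2 - (c + 1 - s) = s + 1 by omega]
  rfl

theorem FtailEntry_eq_add_mul_of_lt (hq : q ≠ -1) {s r c : ℕ} (hsc : s < c) (hcr : c < r) :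
    FtailEntry q α s r c =
      FtailEntry q α (s + 1) r c +
        FtailEntry q α (s + 1) r (c + 1) * mMult q α (c + 2) (c + 1 - s) := by
  obtain ⟨k, rfl⟩ : ∃ k, c = s + 1 + k := ⟨c - (s + 1), by omega⟩
  obtain ⟨e, rfl⟩ : ∃ e, r = s + 1 + k + 1 + e := ⟨r - (s + 1 + k + 1), by omega⟩
  rw [mMult_add_two_of_lt hsc, FtailEntry_of_lt_of_le hq hsc hcr.le,
    FtailEntry_of_lt_of_le hq (s := s + 1) (c := s + 1 + k + 1) (by omega) (by omega)]
  simp only [show s + 1 + k + 1 + e - (s + 1 + k) = e + 1 by omega,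
    show s + 1 + k + 1 + e - (s + 1 + k + 1) = e by omega,
    show s + 1 + k + 1 + e - s - 1 = k + 1 + e by omega,
    show s + 1 + k + 1 + e - (s + 1) - 1 = k + e by omega,
    show s + 1 + k - s - 1 = k by omega, show s + 1 + k + 1 - (s + 1) - 1 = k by omega]
  set R := qInt q (s + 1 + k + 1 + e)
  set C := qInt q (s + 1 + k)
  set C1 := qInt q (s + 1 + k + 1)
  set A := (-α * R) ^ e
  have hcancel : (R / C1) ^ (s + 1) * (C1 / C) ^ (s + 1) = (R / C) ^ (s + 1) := by
    rw [← mul_pow, div_mul_div_cancel₀ (qInt_ne_zero hq (by omega))]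
  have hdiv : R / C * C = R := div_mul_cancel₀ R (qInt_ne_zero hq (by omega))
  rcases k with _ | k
  · rw [FtailEntry_of_le le_rfl (by omega), qBinom_zero_right hq, qBinom_zero_right hq]
    linear_combination (A * α * C) * hcancel + (A * α * (R / C) ^ s) * hdiv
  · rw [FtailEntry_of_lt_of_le hq (by omega) (by omega)]
    simp only [show s + 1 + (k + 1) + 1 + e - (s + 1 + (k + 1)) = e + 1 by omega,
      show s + 1 + (k + 1) + 1 + e - (s + 1) - 1 = k + 1 + e by omega,
      show s + 1 + (k + 1) - (s + 1) - 1 = k by omega]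
    have key : C * qBinom q (k + 1 + 1 + e) (k + 1) =
        R * qBinom q (k + 1 + e) k +
          q ^ (k + 1) * qInt q (s + 1) * qBinom q (k + 1 + e) (k + 1) := by
      have h := qInt_mul_qBinom_succ_succ hq (m := k + 1 + e) (k := k) (by omega) (s + 1)
      rwa [show k + 1 + (s + 1) = s + 1 + (k + 1) by omega,
        show k + 1 + e + 1 + (s + 1) = s + 1 + (k + 1) + 1 + e by omega,
        show k + 1 + e + 1 = k + 1 + 1 + e by omega] at h
    linear_combination
      (A * q ^ (k + 1) * qInt q (s + 1) * α * qBinom q (k + 1 + e) (k + 1)) * hcancel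
      - (A * α * (R / C) ^ (s + 1)) * key
      + (A * α * qBinom q (k + 1 + 1 + e) (k + 1) * (R / C) ^ s) * hdiv

theorem FtailEntry_eq_add_mul (hq : q ≠ -1) (s r c : ℕ) :
    FtailEntry q α s r c =
      FtailEntry q α (s + 1) r c +
        FtailEntry q α (s + 1) r (c + 1) *
          if s ≤ c then mMult q α (c + 2) (c + 1 - s) else 0 := by
  rcases lt_trichotomy c r with hcr | rfl | hcr
  · by_cases hsc : s < c
    · rw [if_pos hsc.le]
      exact FtailEntry_eq_add_mul_of_lt hq hsc hcr
    rw [FtailEntry_of_le (not_lt.1 hsc) hcr.ne, FtailEntry_of_le (by omega) hcr.ne]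
    rcases (not_lt.1 hsc).eq_or_lt with rfl | hcs
    · simp [mMult]
    · rw [if_neg (by omega), mul_zero, add_zero]
  · rw [FtailEntry_self, FtailEntry_self, FtailEntry_of_lt c.lt_add_one, zero_mul, add_zero]
  · rw [FtailEntry_of_lt hcr, FtailEntry_of_lt hcr, FtailEntry_of_lt (by omega), zero_mul,
      add_zero]

theorem Ftail_succ_mul_Fmat (hq : q ≠ -1) (n s : ℕ) :
    Ftail q α n (s + 1) * Fmat q α n (s + 1) = Ftail q α n s := by
  ext r c
  have hr := r.isLt
  have hc := c.isLt
  calc (Ftail q α n (s + 1) * Fmat q α n (s + 1)) r c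
      = ∑ x ∈ range (n + 2), FtailEntry q α (s + 1) r x *
          (if x = c then 1
            else if x = c + 1 ∧ s + 1 ≤ x then mMult q α (x + 1) (x + 1 - (s + 1))
            else 0) := by
        rw [sum_range_succ, FtailEntry_of_lt (by omega), zero_mul, add_zero,
          ← Fin.sum_univ_eq_sum_range]
        simp [mul_apply, Ftail, Fmat, Fin.ext_iff]
    _ = FtailEntry q α (s + 1) r c +
          FtailEntry q α (s + 1) r (c + 1) *
            if s ≤ c then mMult q α (c + 2) (c + 1 - s) else 0 := by
        rw [sum_eq_add_of_mem (c : ℕ) (c + 1) (mem_range.2 (by omega)) (mem_range.2 (by omega))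
          (by omega)]
        · simp
        · intro x _ hx
          simp [hx.1, hx.2]
    _ = Ftail q α n s r c := (FtailEntry_eq_add_mul hq s r c).symm

theorem Ftail_self (n : ℕ) : Ftail q α n n = 1 := by
  ext r c
  rw [one_apply]
  simp only [Ftail, of_apply]
  split_ifs with h
  · rw [h, FtailEntry_self]
  · exact FtailEntry_of_le (Nat.lt_succ_iff.1 c.isLt) fun h' => h (Fin.ext h').symm

theorem Ftail_zero_mul_diagonal (hq : q ≠ -1) (n : ℕ) :
    Ftail q α n 0 * diagonal (fun i : Fin (n + 1) => q ^ ((i : ℕ).choose 2)) = Lmat q α n := by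
  ext r c
  rw [mul_diagonal]
  simp only [Ftail, Lmat, of_apply]
  by_cases hc : (c : ℕ) = 0
  · by_cases hr : (r : ℕ) = 0
    · simp [hc, hr, FtailEntry_self]
    · simp [hc, hr, FtailEntry_of_le le_rfl (Ne.symm hr)]
  rw [if_neg hc]
  split_ifs with hcr
  · rw [FtailEntry_of_lt_of_le hq (Nat.pos_of_ne_zero hc) hcr, Nat.sub_zero, Nat.sub_zero,
      qBinom_symm q (show (c : ℕ) - 1 ≤ r - 1 by omega),
      show (r : ℕ) - 1 - (c - 1) = r - c by omega]
    ring
  · rw [FtailEntry_of_lt (by omega), zero_mul]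

end FactorTail

theorem Lmat_bidiagonal_factorization (q α : ℝ) (hq : 0 < q) (n : ℕ) :
    Lmat q α n =
      (((List.range n).reverse).map fun k => Fmat q α n (k + 1)).prod *
        Matrix.diagonal (fun i : Fin (n + 1) => q ^ ((i : ℕ).choose 2)) := by
  have hq' : q ≠ -1 := by linarith
  rw [← Ftail_zero_mul_diagonal hq' n,
    ← mul_prod_map_range_reverse_of_mul_eq (Ftail q α n) (fun k => Fmat q α n (k + 1)) n
      fun s _ => Ftail_succ_mul_Fmat hq' n s,
    Ftail_self, one_mul]
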